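/- arXiv:1401.6014 — 2 statements merged into one kernel-verified Lean document; each statement's English description precedes it below -/
import Mathlib

section
/- Let 𝕊 be a K×K {0,1}-matrix each of whose rows contains at least one entry 1, and S_1, …, S_K ∈ ℝ^{d×d}, with Kozyakin 𝕊-lift S^{(1)}, …, S^{(K)} ∈ ℝ^{Kd×Kd}. If a word (i_0, …, i_{n-1}) ∈ {1,…,K}^n with n ≥ 2 is not 𝕊-admissible (i.e. s_{i_k i_{k+1}} = 0 for some 0 ≤ k ≤ n−2), then S^{(i_0)} ⋯ S^{(i_{n-1})} = 0, the zero matrix in ℝ^{Kd×Kd}. -/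
open MeasureTheory Filter Matrix
open scoped Kronecker

/-- The ℓ²-operator norm of a real square matrix. -/
noncomputable def l2OpNorm {ι : Type*} [Fintype ι] [DecidableEq ι]
    (A : Matrix ι ι ℝ) : ℝ :=
  ‖Matrix.toEuclideanCLM (𝕜 := ℝ) A‖

/-- The spectral radius of a real square matrix: the maximum of the absolute values
of its (complex) eigenvalues. -/
noncomputable def specRad {ι : Type*} [Fintype ι] [DecidableEq ι]
    (A : Matrix ι ι ℝ) : ℝ :=
  (spectralRadius ℂ (A.map (fun x => (x : ℂ)))).toReal

/-- The ordered product `S_{w 0} * S_{w 1} * ⋯ * S_{w (n-1)}`. -/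
noncomputable def wordProd {K : ℕ} {ι : Type*} [Fintype ι] [DecidableEq ι]
    (S : Fin K → Matrix ι ι ℝ) (n : ℕ) (w : ℕ → Fin K) : Matrix ι ι ℝ :=
  (List.ofFn fun k : Fin n => S (w k)).prod

/-- The word `(w 0, …, w (n-1))` is `𝕊`-admissible. -/
def Admissible {K : ℕ} (𝕊 : Matrix (Fin K) (Fin K) ℝ) (n : ℕ) (w : ℕ → Fin K) : Prop :=
  ∀ k, k + 1 < n → 𝕊 (w k) (w (k + 1)) = 1

/-- The word `(w 0, …, w (n-1))` is `𝕊`-periodically extendable. -/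
def PerExt {K : ℕ} (𝕊 : Matrix (Fin K) (Fin K) ℝ) (n : ℕ) (w : ℕ → Fin K) : Prop :=
  Admissible 𝕊 n w ∧ 𝕊 (w (n - 1)) (w 0) = 1

/-- The Kozyakin `𝕊`-lift `S^{(k)} = (δ_kᵀ 𝕊_k) ⊗ S_k`. -/
noncomputable def kozLift {K d : ℕ} (𝕊 : Matrix (Fin K) (Fin K) ℝ)
    (S : Fin K → Matrix (Fin d) (Fin d) ℝ) (k : Fin K) :
    Matrix (Fin K × Fin d) (Fin K × Fin d) ℝ :=
  (Matrix.vecMulVec (Pi.single k 1) (𝕊 k)) ⊗ₖ S k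

/-! Since `(δ_iᵀ 𝕊_i)(δ_jᵀ 𝕊_j) = s_{ij} δ_iᵀ 𝕊_j`, the mixed-product rule for `⊗` gives
`S^{(i)} S^{(j)} = (s_{ij} δ_iᵀ 𝕊_j) ⊗ S_i S_j`, which vanishes when `s_{ij} = 0`; a word that is
not admissible has two consecutive letters with `s_{ij} = 0`, so its product has a zero factor. -/

theorem List.prod_ofFn_eq_zero_of_mul_eq_zero {M : Type*} [MonoidWithZero M]
    (f : ℕ → M) {n k : ℕ} (hk : k + 1 < n) (hf : f k * f (k + 1) = 0) :
    (List.ofFn fun i : Fin n => f i).prod = 0 := by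
  induction k generalizing n f with
  | zero =>
    obtain ⟨m, rfl⟩ : ∃ m, n = m + 2 := ⟨n - 2, by omega⟩
    simp only [List.ofFn_succ, List.prod_cons, ← mul_assoc]
    rw [Fin.val_zero, Fin.val_succ, Fin.val_zero, zero_add, hf, zero_mul]
  | succ k ih =>
    obtain ⟨m, rfl⟩ : ∃ m, n = m + 1 := ⟨n - 1, by omega⟩
    rw [List.ofFn_succ, List.prod_cons]
    simpa using congrArg (f 0 * ·) (ih (fun i => f (i + 1)) (by omega) hf)

theorem kozLift_mul_kozLift {K d : ℕ} (𝕊 : Matrix (Fin K) (Fin K) ℝ)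
    (S : Fin K → Matrix (Fin d) (Fin d) ℝ) (i j : Fin K) :
    kozLift 𝕊 S i * kozLift 𝕊 S j =
      vecMulVec (Pi.single i 1) (𝕊 i j • 𝕊 j) ⊗ₖ (S i * S j) := by
  rw [kozLift, kozLift, ← mul_kronecker_mul, vecMulVec_mul_vecMulVec, dotProduct_single,
    mul_one]

theorem kozLift_mul_kozLift_eq_zero {K d : ℕ} (𝕊 : Matrix (Fin K) (Fin K) ℝ)
    (S : Fin K → Matrix (Fin d) (Fin d) ℝ) {i j : Fin K} (h : 𝕊 i j = 0) :
    kozLift 𝕊 S i * kozLift 𝕊 S j = 0 := by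
  rw [kozLift_mul_kozLift, h, zero_smul, vecMulVec_zero, zero_kronecker]

theorem stmt10_general {K d : ℕ}
    (S : Fin K → Matrix (Fin d) (Fin d) ℝ)
    (𝕊 : Matrix (Fin K) (Fin K) ℝ) (h01 : ∀ i j, 𝕊 i j = 0 ∨ 𝕊 i j = 1)
    (n : ℕ) (w : ℕ → Fin K)
    (hnotadm : ¬ Admissible 𝕊 n w) :
    wordProd (kozLift 𝕊 S) n w = 0 := by
  simp only [Admissible, not_forall] at hnotadm
  obtain ⟨k, hk, hforbidden⟩ := hnotadm
  exact List.prod_ofFn_eq_zero_of_mul_eq_zero (fun i => kozLift 𝕊 S (w i)) hk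
    (kozLift_mul_kozLift_eq_zero 𝕊 S ((h01 _ _).resolve_right hforbidden))

theorem stmt10 {K d : ℕ} (hK : 2 ≤ K) (hd : 1 ≤ d)
    (S : Fin K → Matrix (Fin d) (Fin d) ℝ)
    (𝕊 : Matrix (Fin K) (Fin K) ℝ) (h01 : ∀ i j, 𝕊 i j = 0 ∨ 𝕊 i j = 1)
    (hrow : ∀ i, ∃ j, 𝕊 i j = 1)
    (n : ℕ) (hn : 2 ≤ n) (w : ℕ → Fin K)
    (hnotadm : ¬ Admissible 𝕊 n w) :
    wordProd (kozLift 𝕊 S) n w = 0 :=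
  stmt10_general S 𝕊 h01 n w hnotadm
end

section
/- Let 𝕊 be a K×K {0,1}-matrix each of whose rows contains at least one entry 1, and S_1, …, S_K ∈ ℝ^{d×d}, with Kozyakin 𝕊-lift S^{(1)}, …, S^{(K)} ∈ ℝ^{Kd×Kd}. Then for every n ≥ 2 and every 𝕊-admissible word (i_0, …, i_{n-1}) ∈ {1,…,K}^n, one has s_{i_{n-1} i_0} · ρ(S_{i_0} ⋯ S_{i_{n-1}}) = ρ(S^{(i_0)} ⋯ S^{(i_{n-1})}). -/
open MeasureTheory Filter Matrix
open scoped Kronecker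

/-!
Along an admissible word the lifted product telescopes to the rank-one Kronecker product
`(δ_{i₀}ᵀ 𝕊_{i_{n-1}}) ⊗ S_{i₀} ⋯ S_{i_{n-1}}`. Factoring `u vᵀ ⊗ P = (u ⊗ P) (vᵀ ⊗ I)` and
swapping the two factors, which preserves the nonzero spectrum, leaves `(vᵀ u) P`, and here
`vᵀ u = s_{i_{n-1} i₀}`.
-/

open Polynomial

namespace Matrix

variable {𝕜 l m n : Type*} [Field 𝕜] [Fintype m] [DecidableEq m] [Fintype n] [DecidableEq n]

theorem spectrum_mul_comm_diff_zero (A : Matrix m n 𝕜) (B : Matrix n m 𝕜) :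
    spectrum 𝕜 (A * B) \ {0} = spectrum 𝕜 (B * A) \ {0} := by
  ext μ
  have h := congrArg (eval μ) (charpoly_mul_comm' A B)
  simp only [eval_mul, eval_pow, eval_X] at h
  simp only [Set.mem_sdiff, Set.mem_singleton_iff, mem_spectrum_iff_isRoot_charpoly, IsRoot.def,
    and_congr_left_iff]
  intro hμ
  constructor <;> intro hroot
  · simpa [hroot, hμ] using h.symm
  · simpa [hroot, hμ] using h

theorem spectrum_vecMulVec_kronecker_diff_zero [Fintype l] [DecidableEq l] (u v : l → 𝕜)
    (P : Matrix n n 𝕜) :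
    spectrum 𝕜 (vecMulVec u v ⊗ₖ P) \ {0} = spectrum 𝕜 ((v ⬝ᵥ u) • P) \ {0} := by
  have hfactor : vecMulVec u v ⊗ₖ P
      = (replicateCol Unit u ⊗ₖ P) * (replicateRow Unit v ⊗ₖ (1 : Matrix n n 𝕜)) := by
    rw [← mul_kronecker_mul, ← vecMulVec_eq, mul_one]
  have hswap : reindexAlgEquiv 𝕜 𝕜 (Equiv.punitProd n)
      ((replicateRow Unit v ⊗ₖ (1 : Matrix n n 𝕜)) * (replicateCol Unit u ⊗ₖ P))
      = (v ⬝ᵥ u) • P := by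
    rw [← mul_kronecker_mul, one_mul, replicateRow_mul_replicateCol]
    ext i j
    simp
  rw [hfactor, spectrum_mul_comm_diff_zero, ← hswap, AlgEquiv.spectrum_eq]

end Matrix

section

variable {𝕜 A B : Type*} [NormedField 𝕜] [Ring A] [Algebra 𝕜 A] [Ring B] [Algebra 𝕜 B]

theorem spectralRadius_le_of_spectrum_diff_zero_subset {a : A} {b : B}
    (h : spectrum 𝕜 a \ {0} ⊆ spectrum 𝕜 b) : spectralRadius 𝕜 a ≤ spectralRadius 𝕜 b :=
  iSup₂_le fun k hk => by
    rcases eq_or_ne k 0 with rfl | hk0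
    · simp
    · exact le_iSup₂ (f := fun k (_ : k ∈ spectrum 𝕜 b) => (‖k‖₊ : ENNReal)) k (h ⟨hk, hk0⟩)

theorem spectralRadius_eq_of_spectrum_diff_zero_eq {a : A} {b : B}
    (h : spectrum 𝕜 a \ {0} = spectrum 𝕜 b \ {0}) : spectralRadius 𝕜 a = spectralRadius 𝕜 b :=
  le_antisymm (spectralRadius_le_of_spectrum_diff_zero_subset (h ▸ Set.sdiff_subset))
    (spectralRadius_le_of_spectrum_diff_zero_subset (h.symm ▸ Set.sdiff_subset))

end

theorem specRad_vecMulVec_kronecker {l n : Type*} [Fintype l] [DecidableEq l] [Fintype n]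
    [DecidableEq n] (u v : l → ℝ) (P : Matrix n n ℝ) :
    specRad (vecMulVec u v ⊗ₖ P) = specRad ((v ⬝ᵥ u) • P) := by
  have hL : (vecMulVec u v ⊗ₖ P).map ((↑) : ℝ → ℂ)
      = vecMulVec (fun i => (u i : ℂ)) (fun i => (v i : ℂ)) ⊗ₖ P.map ((↑) : ℝ → ℂ) := by
    ext; simp [vecMulVec_apply]
  have hR : ((v ⬝ᵥ u) • P).map ((↑) : ℝ → ℂ)
      = ((fun i => (v i : ℂ)) ⬝ᵥ (fun i => (u i : ℂ))) • P.map ((↑) : ℝ → ℂ) := by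
    ext; simp [dotProduct]
  rw [specRad, specRad, hL, hR,
    spectralRadius_eq_of_spectrum_diff_zero_eq (spectrum_vecMulVec_kronecker_diff_zero _ _ _)]

section Words

variable {K : ℕ} {ι : Type*} [Fintype ι] [DecidableEq ι]

theorem wordProd_succ (S : Fin K → Matrix ι ι ℝ) (n : ℕ) (w : ℕ → Fin K) :
    wordProd S (n + 1) w = S (w 0) * wordProd S n (fun k => w (k + 1)) := by
  simp [wordProd, List.ofFn_succ]

theorem Admissible.tail {𝕊 : Matrix (Fin K) (Fin K) ℝ} {n : ℕ} {w : ℕ → Fin K}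
    (h : Admissible 𝕊 (n + 1) w) : Admissible 𝕊 n (fun k => w (k + 1)) :=
  fun k hk => h (k + 1) (by omega)

end Words

theorem wordProd_kozLift_succ {K d : ℕ} (𝕊 : Matrix (Fin K) (Fin K) ℝ)
    (S : Fin K → Matrix (Fin d) (Fin d) ℝ) (m : ℕ) (w : ℕ → Fin K)
    (hadm : Admissible 𝕊 (m + 1) w) :
    wordProd (kozLift 𝕊 S) (m + 1) w
      = vecMulVec (Pi.single (w 0) 1) (𝕊 (w m)) ⊗ₖ wordProd S (m + 1) w := by
  induction m generalizing w with
  | zero => simp [wordProd, kozLift]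
  | succ m ih =>
    rw [wordProd_succ, wordProd_succ S, ih _ hadm.tail, kozLift, ← mul_kronecker_mul,
      vecMulVec_mul_vecMulVec, dotProduct_single_one, hadm 0 (by omega), one_smul]

theorem stmt11_general {K d : ℕ}
    (S : Fin K → Matrix (Fin d) (Fin d) ℝ)
    (𝕊 : Matrix (Fin K) (Fin K) ℝ) (h01 : ∀ i j, 𝕊 i j = 0 ∨ 𝕊 i j = 1)
    (n : ℕ) (hn : 2 ≤ n) (w : ℕ → Fin K)
    (hadm : Admissible 𝕊 n w) :
    𝕊 (w (n - 1)) (w 0) * specRad (wordProd S n w)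
      = specRad (wordProd (kozLift 𝕊 S) n w) := by
  obtain ⟨m, rfl⟩ : ∃ m, n = m + 1 := ⟨n - 1, by omega⟩
  rw [wordProd_kozLift_succ 𝕊 S m w hadm, specRad_vecMulVec_kronecker, dotProduct_single_one,
    Nat.add_sub_cancel]
  rcases h01 (w m) (w 0) with h | h <;> simp [h, specRad]

theorem stmt11 {K d : ℕ} (hK : 2 ≤ K) (hd : 1 ≤ d)
    (S : Fin K → Matrix (Fin d) (Fin d) ℝ)
    (𝕊 : Matrix (Fin K) (Fin K) ℝ) (h01 : ∀ i j, 𝕊 i j = 0 ∨ 𝕊 i j = 1)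
    (hrow : ∀ i, ∃ j, 𝕊 i j = 1)
    (n : ℕ) (hn : 2 ≤ n) (w : ℕ → Fin K)
    (hadm : Admissible 𝕊 n w) :
    𝕊 (w (n - 1)) (w 0) * specRad (wordProd S n w)
      = specRad (wordProd (kozLift 𝕊 S) n w) :=
  stmt11_general S 𝕊 h01 n hn w hadm
end
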